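/- In the quaternion group Q₈ = ⟨x, y : x² = y², yxy⁻¹ = x⁻¹⟩ with generators x, y, the Pell-Narayana orbit s₀ = x, s₁ = y, s₂ = y², sₙ = sₙ₋₃·sₙ₋₁² for n ≥ 3 is simply periodic with period exactly 6, taking the values x, y, y², x, y³, e. -/
import Mathlib


/-- The Pell-Narayana orbit of a group with generating pair (x, y):
s₀ = x, s₁ = y, s₂ = y², sₙ = sₙ₋₃ · (sₙ₋₁)² for n ≥ 3. -/
def PNorbit {G : Type*} [Group G] (x y : G) : ℕ → G
  | 0 => x
  | 1 => y
  | 2 => y ^ 2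
  | n + 3 => PNorbit x y n * (PNorbit x y (n + 2)) ^ 2

lemma comm_of_gen {G : Type*} [Group G] {x y : G} (hc : x * y = y * x)
    (hgen : Subgroup.closure {x, y} = ⊤) : ∀ a b : G, a * b = b * a := by
  have step : ∀ g : G, x * g = g * x ∧ y * g = g * y := by
    intro g
    have hle : Subgroup.closure {x, y} ≤ Subgroup.centralizer {x, y} := by
      rw [Subgroup.closure_le]
      intro z hz
      rw [SetLike.mem_coe, Subgroup.mem_centralizer_iff]
      intro w hw
      rcases hz with rfl | hz <;> rcases hw with rfl | hw <;>
        simp_all [Set.mem_singleton_iff]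
    have hg : g ∈ Subgroup.centralizer {x, y} :=
      hle (by rw [hgen]; exact Subgroup.mem_top g)
    rw [Subgroup.mem_centralizer_iff] at hg
    exact ⟨hg x (by left; rfl), hg y (by right; rfl)⟩
  intro a b
  have hle2 : Subgroup.closure {x, y} ≤ Subgroup.centralizer {a} := by
    rw [Subgroup.closure_le]
    intro z hz
    rw [SetLike.mem_coe, Subgroup.mem_centralizer_iff]
    intro w hw
    rw [Set.mem_singleton_iff] at hw
    rw [hw]
    rcases hz with rfl | hz
    · exact ((step a).1).symm
    · rw [Set.mem_singleton_iff] at hz; subst hz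
      exact ((step a).2).symm
  have hb : b ∈ Subgroup.centralizer {a} :=
    hle2 (by rw [hgen]; exact Subgroup.mem_top b)
  rw [Subgroup.mem_centralizer_iff] at hb
  exact hb a rfl

lemma q8_not_comm {x y : QuaternionGroup 2} (hc : x * y = y * x)
    (hgen : Subgroup.closure {x, y} = ⊤) : False :=
  (by decide : ¬ ∀ a b : QuaternionGroup 2, a * b = b * a) (comm_of_gen hc hgen)

theorem PNorbit_quaternionGroup (x y : QuaternionGroup 2)
    (hxy : x ^ 2 = y ^ 2) (hconj : y * x * y⁻¹ = x⁻¹)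
    (hgen : Subgroup.closure {x, y} = ⊤) :
    IsLeast {k : ℕ | 0 < k ∧ ∀ n : ℕ, PNorbit x y (n + k) = PNorbit x y n} 6 ∧
    PNorbit x y 0 = x ∧ PNorbit x y 1 = y ∧ PNorbit x y 2 = y ^ 2 ∧
    PNorbit x y 3 = x ∧ PNorbit x y 4 = y ^ 3 ∧ PNorbit x y 5 = 1 := by
  -- basic order facts
  have h1 : y * x ^ 2 * y⁻¹ = x⁻¹ * x⁻¹ := by
    calc y * x ^ 2 * y⁻¹ = (y * x * y⁻¹) * (y * x * y⁻¹) := by simp [pow_two, mul_assoc]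
    _ = x⁻¹ * x⁻¹ := by rw [hconj]
  have h2 : x⁻¹ * x⁻¹ = y ^ 2 := by
    rw [← h1, hxy]; group
  have h3 : x⁻¹ * x⁻¹ = x ^ 2 := h2.trans hxy.symm
  have hx4 : x ^ 4 = 1 := by
    calc x ^ 4 = x ^ 2 * x ^ 2 := by group
    _ = x ^ 2 * (x⁻¹ * x⁻¹) := by rw [h3]
    _ = 1 := by group
  have hy4 : y ^ 4 = 1 := by
    have : y ^ 4 = (x ^ 2) ^ 2 := by rw [hxy]; group
    rw [this, show (x ^ 2) ^ 2 = x ^ 4 from by group, hx4]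
  -- explicit values
  have s0 : PNorbit x y 0 = x := rfl
  have s1 : PNorbit x y 1 = y := rfl
  have s2 : PNorbit x y 2 = y ^ 2 := rfl
  have s3 : PNorbit x y 3 = x := by
    show PNorbit x y 0 * (PNorbit x y 2) ^ 2 = x
    rw [s0, s2]
    calc x * (y ^ 2) ^ 2 = x * y ^ 4 := by group
    _ = x := by rw [hy4]; group
  have s4 : PNorbit x y 4 = y ^ 3 := by
    show PNorbit x y 1 * (PNorbit x y 3) ^ 2 = y ^ 3
    rw [s1, s3]
    calc y * x ^ 2 = y * y ^ 2 := by rw [hxy]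
    _ = y ^ 3 := by group
  have s5 : PNorbit x y 5 = 1 := by
    show PNorbit x y 2 * (PNorbit x y 4) ^ 2 = 1
    rw [s2, s4]
    calc y ^ 2 * (y ^ 3) ^ 2 = y ^ 4 * y ^ 4 := by group
    _ = 1 := by rw [hy4]; group
  have s6 : PNorbit x y 6 = x := by
    show PNorbit x y 3 * (PNorbit x y 5) ^ 2 = x
    rw [s3, s5]; group
  have s7 : PNorbit x y 7 = y := by
    show PNorbit x y 4 * (PNorbit x y 6) ^ 2 = y
    rw [s4, s6]
    calc y ^ 3 * x ^ 2 = y ^ 3 * y ^ 2 := by rw [hxy]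
    _ = y * y ^ 4 := by group
    _ = y := by rw [hy4]; group
  have s8 : PNorbit x y 8 = y ^ 2 := by
    show PNorbit x y 5 * (PNorbit x y 7) ^ 2 = y ^ 2
    rw [s5, s7]; group
  -- periodicity
  have key : ∀ n, PNorbit x y (n + 6) = PNorbit x y n := by
    intro n
    induction n using Nat.strong_induction_on with
    | _ n ih =>
      match n with
      | 0 => rw [s6, s0]
      | 1 => rw [s7, s1]
      | 2 => rw [s8, s2]
      | (m + 3) =>
        have h0 := ih m (by omega)
        have hmm := ih (m + 2) (by omega)
        calc PNorbit x y (m + 3 + 6)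
            = PNorbit x y (m + 6) * (PNorbit x y (m + 6 + 2)) ^ 2 := rfl
        _ = PNorbit x y m * (PNorbit x y (m + 2)) ^ 2 := by
            rw [h0, show m + 6 + 2 = m + 2 + 6 from by ring, hmm]
        _ = PNorbit x y (m + 3) := rfl
  refine ⟨⟨⟨by norm_num, key⟩, ?_⟩, s0, s1, s2, s3, s4, s5⟩
  -- lower bound
  rintro k ⟨hk0, hk⟩
  by_contra hlt
  push_neg at hlt
  have comm_contra : x * y = y * x → False := fun hc => q8_not_comm hc hgen
  interval_cases k
  · -- k = 1 : y = x
    have := hk 0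
    rw [s1, s0] at this
    subst this
    exact comm_contra rfl
  · -- k = 2 : y² = x
    have := hk 0
    rw [s2, s0] at this
    apply comm_contra
    rw [← this]; group
  · -- k = 3 : y³ = y, so y² = 1
    have := hk 1
    rw [s4, s1] at this
    have hy2 : y ^ 2 = 1 := by
      have : y ^ 3 * y⁻¹ = y * y⁻¹ := by rw [this]
      calc y ^ 2 = y ^ 3 * y⁻¹ := by group
      _ = y * y⁻¹ := this
      _ = 1 := by group
    have hx2 : x ^ 2 = 1 := hxy.trans hy2
    have hxinv : x⁻¹ = x := by
      calc x⁻¹ = x ^ 2 * x⁻¹ := by rw [hx2]; group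
      _ = x := by group
    apply comm_contra
    have : y * x * y⁻¹ = x := hconj.trans hxinv
    calc x * y = (y * x * y⁻¹) * y := by rw [this]
    _ = y * x := by group
  · -- k = 4 : y³ = x
    have := hk 0
    rw [s4, s0] at this
    apply comm_contra
    rw [← this]; group
  · -- k = 5 : 1 = x
    have := hk 0
    rw [s5, s0] at this
    apply comm_contra
    rw [← this]; group
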